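/- Probabilistic Simulation (single revealing attempt): starting from equivalent states, execute a deterministic interleaved fragment ending in a revealing attempt θ in the HIG, and the corresponding delayed fragment in the DAG. If the HIG revealing transition succeeds with probability p(t', u') depending on the pre-reveal true value t' and belief u', and the DAG revealing transition succeeds with probability p(t̂', û'), then both transitions succeed with the same probability, since t' = t̂' and u' = û'. -/

import Mathlib

/-!
The true value and the belief produced by a HIG round do not depend on the knowledge set `Ω`,
so projecting the interleaved HIG run onto either component gives exactly the corresponding
separated fold of the DAG run. The two revealing probabilities are then `p` at equal arguments.
-/

/-- One HIG round (cf. rules H2–H3). -/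
def higStep {T U A₁ A₂ : Type*} (Eff₁ : A₁ → T → T) (Eff₂ : A₂ → U → U)
    (β : A₂ → Set A₁) (s : T × U × Set T) (p : A₂ × A₁) : T × U × Set T :=
  (Eff₁ p.2 s.1, Eff₂ p.1 s.2.1, {t' | ∃ b ∈ β p.1, ∃ t ∈ s.2.2, t' = Eff₁ b t})

section

variable {T U A₁ A₂ : Type*} (Eff₁ : A₁ → T → T) (Eff₂ : A₂ → U → U) (β : A₂ → Set A₁)

theorem foldl_higStep_fst (ps : List (A₂ × A₁)) (s : T × U × Set T) :
    (ps.foldl (higStep Eff₁ Eff₂ β) s).1 = (ps.map Prod.snd).foldl (fun t b => Eff₁ b t) s.1 := by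
  rw [List.foldl_map]
  exact (List.foldl_hom Prod.fst fun _ _ => rfl).symm

theorem foldl_higStep_snd_fst (ps : List (A₂ × A₁)) (s : T × U × Set T) :
    (ps.foldl (higStep Eff₁ Eff₂ β) s).2.1
      = (ps.map Prod.fst).foldl (fun u a => Eff₂ a u) s.2.1 := by
  rw [List.foldl_map]
  exact (List.foldl_hom (fun s : T × U × Set T => s.2.1) fun _ _ => rfl).symm

end

theorem probabilistic_simulation_single_general {T U A₁ A₂ : Type*}
    (Eff₁ : A₁ → T → T) (Eff₂ : A₂ → U → U) (β : A₂ → Set A₁) (p : T → U → ℝ)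
    (ps : List (A₂ × A₁)) (t₀ : T) (u₀ : U) :
    (ps.foldl (higStep Eff₁ Eff₂ β) (t₀, u₀, {t₀})).1
        = (ps.map Prod.snd).foldl (fun t b => Eff₁ b t) t₀ ∧
    (ps.foldl (higStep Eff₁ Eff₂ β) (t₀, u₀, {t₀})).2.1
        = (ps.map Prod.fst).foldl (fun u a => Eff₂ a u) u₀ ∧
    p (ps.foldl (higStep Eff₁ Eff₂ β) (t₀, u₀, {t₀})).1
      (ps.foldl (higStep Eff₁ Eff₂ β) (t₀, u₀, {t₀})).2.1
        = p ((ps.map Prod.snd).foldl (fun t b => Eff₁ b t) t₀)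
            ((ps.map Prod.fst).foldl (fun u a => Eff₂ a u) u₀) := by
  have htrue := foldl_higStep_fst Eff₁ Eff₂ β ps (t₀, u₀, {t₀})
  have hbelief := foldl_higStep_snd_fst Eff₁ Eff₂ β ps (t₀, u₀, {t₀})
  exact ⟨htrue, hbelief, by rw [htrue, hbelief]⟩

/-- Probabilistic simulation, single revealing attempt: starting from equivalent
states, after the deterministic interleaved fragment (HIG) resp. the delayed fragment
(DAG), the pre-reveal true values and beliefs coincide, hence the revealing success
probabilities `p(t',u')` and `p(t̂',û')` are equal, and the post-success states
(belief set to the true value) are again equivalent. -/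
theorem probabilistic_simulation_single {T U A₁ A₂ : Type*}
    (Eff₁ : A₁ → T → T) (Eff₂ : A₂ → U → U) (β : A₂ → Set A₁) (p : T → U → ℝ)
    (ps : List (A₂ × A₁)) (hβ : ∀ q ∈ ps, q.2 ∈ β q.1) (t₀ : T) (u₀ : U) :
    (ps.foldl (higStep Eff₁ Eff₂ β) (t₀, u₀, {t₀})).1
        = (ps.map Prod.snd).foldl (fun t b => Eff₁ b t) t₀ ∧
    (ps.foldl (higStep Eff₁ Eff₂ β) (t₀, u₀, {t₀})).2.1
        = (ps.map Prod.fst).foldl (fun u a => Eff₂ a u) u₀ ∧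
    p (ps.foldl (higStep Eff₁ Eff₂ β) (t₀, u₀, {t₀})).1
      (ps.foldl (higStep Eff₁ Eff₂ β) (t₀, u₀, {t₀})).2.1
        = p ((ps.map Prod.snd).foldl (fun t b => Eff₁ b t) t₀)
            ((ps.map Prod.fst).foldl (fun u a => Eff₂ a u) u₀) :=
  probabilistic_simulation_single_general Eff₁ Eff₂ β p ps t₀ u₀
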